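/- Let τ be an exponentially distributed random variable with rate u > 0, independent of the subordinator T, and let ξ < f(u). Then E[ exp( ξ · S(τ) ) ] = f(u) / ( f(u) − ξ ). In particular, for every t > 0 and every ξ > 0, E[ exp( ξ · S(t) ) ] < ∞, i.e., S(t) has finite exponential moments of all orders. -/

import Mathlib

open MeasureTheory ProbabilityTheory Filter Set

noncomputable section

/-- The (generalized, right-continuous) inverse of an increasing process `T`:
`S(t) = inf {τ > 0 : T(τ) > t}` (the inverse subordinator / first-passage time process). -/
def invSub {Ω : Type*} (T : ℝ → Ω → ℝ) (t : ℝ) (ω : Ω) : ℝ :=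
  sInf {τ : ℝ | 0 < τ ∧ t < T τ ω}

/-- The Bernstein function (Laplace exponent) associated with the Lévy measure `ν`
(zero drift): `f(u) = ∫_(0,∞) (1 - e^{-u x}) ν(dx)`. -/
def levyExponent (ν : Measure ℝ) (u : ℝ) : ℝ :=
  ∫ x in Set.Ioi (0 : ℝ), (1 - Real.exp (-u * x)) ∂ν

/-- `ν` is a Lévy measure of a subordinator, supported in `(0,∞)` with
`∫ min(1,x) ν(dx) < ∞`, and with infinite total mass `ν(0,∞) = ∞`. -/
def IsLevyMeasure (ν : Measure ℝ) : Prop :=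
  ν (Set.Iic 0) = 0 ∧ ν (Set.Ioi 0) = ⊤ ∧
    ∫⁻ x in Set.Ioi (0 : ℝ), ENNReal.ofReal (min 1 x) ∂ν ≠ ⊤

/-- An increasing Lévy process (subordinator): `T(0) = 0`, a.s. increasing càdlàg paths,
stationary and independent increments. -/
structure IsSubordinatorProc {Ω : Type*} [MeasurableSpace Ω] (P : Measure Ω)
    (T : ℝ → Ω → ℝ) : Prop where
  meas : ∀ t, Measurable (T t)
  start : ∀ᵐ ω ∂P, T 0 ω = 0
  mono : ∀ᵐ ω ∂P, MonotoneOn (fun t => T t ω) (Set.Ici 0)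
  rightCont : ∀ᵐ ω ∂P, ∀ t ∈ Set.Ici (0 : ℝ),
    ContinuousWithinAt (fun s => T s ω) (Set.Ici t) t
  leftLim : ∀ᵐ ω ∂P, ∀ t ∈ Set.Ioi (0 : ℝ), ∃ l : ℝ,
    Filter.Tendsto (fun s => T s ω) (nhdsWithin t (Set.Iio t)) (nhds l)
  statInc : ∀ s t : ℝ, 0 ≤ s → 0 ≤ t →
    P.map (fun ω => T (s + t) ω - T s ω) = P.map (T t)
  indepInc : ∀ n : ℕ, ∀ t : ℕ → ℝ, Monotone t → (∀ i, 0 ≤ t i) →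
    iIndepFun
      (fun (i : Fin n) ω => T (t (i + 1)) ω - T (t i) ω) P

/-- `T` has Laplace transform `E[exp(-u T(t))] = exp(-t f(u))`. -/
def HasLaplaceExponent {Ω : Type*} [MeasurableSpace Ω] (P : Measure Ω)
    (T : ℝ → Ω → ℝ) (f : ℝ → ℝ) : Prop :=
  ∀ t : ℝ, 0 ≤ t → ∀ u : ℝ, 0 < u →
    ∫ ω, Real.exp (-u * T t ω) ∂P = Real.exp (-t * f u)

/-- A standard one-dimensional Brownian motion: `B(0) = 0`, a.s. continuous paths,
independent increments, `B(t) - B(s) ~ N(0, t-s)`. -/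
structure IsBrownianMotion {Ω : Type*} [MeasurableSpace Ω] (P : Measure Ω)
    (B : ℝ → Ω → ℝ) : Prop where
  meas : ∀ t, Measurable (B t)
  start : ∀ᵐ ω ∂P, B 0 ω = 0
  cont : ∀ᵐ ω ∂P, Continuous fun t => B t ω
  gaussInc : ∀ s t : ℝ, 0 ≤ s → s ≤ t →
    P.map (fun ω => B t ω - B s ω) = gaussianReal 0 (Real.toNNReal (t - s))
  indepInc : ∀ n : ℕ, ∀ t : ℕ → ℝ, Monotone t → (∀ i, 0 ≤ t i) →
    iIndepFun
      (fun (i : Fin n) ω => B (t (i + 1)) ω - B (t i) ω) P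

/-! Since the paths of `T` are increasing and right-continuous, up to null sets
`{T s < τ} ⊆ {s < S(τ)} ⊆ {T s ≤ τ}`, and by independence both outer events have probability
`E[exp(-u T s)] = exp(-s f(u))` (the law of `τ` has no atoms). So `S(τ)` is exponential with
rate `f(u)`, whose moment generating function at `ξ` is `f(u)/(f(u) - ξ)`. For fixed `t` the
Chernoff bound `P(s < S(t)) ≤ P(T s ≤ t) ≤ exp(v t - s f(v))` gives exponential tails of any
rate `f(v)`, and `f` is unbounded because `ν` has infinite mass. -/

open scoped ENNReal Topology

namespace ProbabilityTheory

instance nullSingletonClass_expMeasure (r : ℝ) : NullSingletonClass (expMeasure r) :=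
  inferInstanceAs (NullSingletonClass (volume.withDensity _))

lemma expMeasure_Iic {r x : ℝ} (hr : 0 < r) (hx : 0 ≤ x) :
    expMeasure r (Iic x) = 1 - ENNReal.ofReal (Real.exp (-r * x)) := by
  have := isProbabilityMeasure_expMeasure hr
  rw [← ofReal_cdf, cdf_expMeasure_eq hr, if_pos hx, ENNReal.ofReal_sub _ (Real.exp_pos _).le,
    ENNReal.ofReal_one, neg_mul]

lemma expMeasure_Ioi {r x : ℝ} (hr : 0 < r) (hx : 0 ≤ x) :
    expMeasure r (Ioi x) = ENNReal.ofReal (Real.exp (-r * x)) := by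
  have := isProbabilityMeasure_expMeasure hr
  rw [← compl_Iic, prob_compl_eq_one_sub measurableSet_Iic, expMeasure_Iic hr hx,
    ENNReal.sub_sub_cancel ENNReal.one_ne_top]
  exact ENNReal.ofReal_le_one.2 (Real.exp_le_one_iff.2 (by nlinarith))

lemma expMeasure_Ici {r x : ℝ} (hr : 0 < r) (hx : 0 ≤ x) :
    expMeasure r (Ici x) = ENNReal.ofReal (Real.exp (-r * x)) := by
  rw [measure_congr Ioi_ae_eq_Ici.symm, expMeasure_Ioi hr hx]

lemma integral_exp_mul_expMeasure {r ξ : ℝ} (hr : 0 < r) (hξ : ξ < r) :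
    ∫ y, Real.exp (ξ * y) ∂expMeasure r = r / (r - ξ) := by
  have hdens : ∀ y, (exponentialPDF r y).toReal • Real.exp (ξ * y)
      = (Ici 0).indicator (fun y => r * Real.exp ((ξ - r) * y)) y := by
    intro y
    rcases le_or_gt 0 y with hy | hy
    · rw [exponentialPDF_of_nonneg hy, ENNReal.toReal_ofReal (by positivity), smul_eq_mul,
        indicator_of_mem (mem_Ici.2 hy), mul_assoc, ← Real.exp_add]
      ring_nf
    · rw [exponentialPDF_of_neg hy, indicator_of_notMem (by simpa using hy)]
      simp
  have hexp : expMeasure r = volume.withDensity (exponentialPDF r) := rfl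
  rw [hexp, integral_withDensity_eq_integral_toReal_smul (f := exponentialPDF r)
      (measurable_exponentialPDFReal r).ennreal_ofReal
      (ae_of_all _ fun _ => ENNReal.ofReal_lt_top),
    funext hdens, integral_indicator measurableSet_Ici, integral_Ici_eq_integral_Ioi,
    integral_const_mul, integral_exp_mul_Ioi (by linarith), mul_zero, Real.exp_zero,
    neg_div, ← div_neg, neg_sub, mul_one_div]

variable {Ω : Type*} [MeasurableSpace Ω] {P : Measure Ω}

lemma map_eq_expMeasure [IsProbabilityMeasure P] {X : Ω → ℝ} {r : ℝ} (hX : AEMeasurable X P)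
    (hr : 0 < r) (htail : ∀ x, 0 ≤ x → P {ω | x < X ω} = ENNReal.ofReal (Real.exp (-r * x))) :
    P.map X = expMeasure r := by
  have := Measure.isProbabilityMeasure_map (μ := P) hX
  have hIic : ∀ x, 0 ≤ x → P.map X (Iic x) = 1 - ENNReal.ofReal (Real.exp (-r * x)) := by
    intro x hx
    rw [← compl_Ioi, prob_compl_eq_one_sub measurableSet_Ioi,
      Measure.map_apply_of_aemeasurable hX measurableSet_Ioi]
    exact congrArg (1 - ·) (htail x hx)
  refine Measure.ext_of_Iic _ _ fun x => ?_
  rcases le_or_gt 0 x with hx | hx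
  · rw [hIic x hx, expMeasure_Iic hr hx]
  · have h0 : P.map X (Iic 0) = 0 := by simp [hIic 0 le_rfl]
    have := isProbabilityMeasure_expMeasure hr
    rw [measure_mono_null (Iic_subset_Iic.2 hx.le) h0, ← ofReal_cdf, cdf_expMeasure_eq hr,
      if_neg (not_le.2 hx), ENNReal.ofReal_zero]

lemma measure_mem_eq_lintegral_of_indepFun [IsFiniteMeasure P] {X Y : Ω → ℝ}
    (hX : AEMeasurable X P) (hY : AEMeasurable Y P) (hind : IndepFun X Y P)
    {s : Set (ℝ × ℝ)} (hs : MeasurableSet s) :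
    P {ω | (X ω, Y ω) ∈ s} = ∫⁻ x, P.map Y (Prod.mk x ⁻¹' s) ∂P.map X := by
  rw [← Measure.prod_apply hs, ← (indepFun_iff_map_prod_eq_prod_map_map hX hY).1 hind,
    Measure.map_apply_of_aemeasurable (hX.prodMk hY) hs]
  rfl

lemma measure_mem_eq_lintegral_exp_of_indepFun [IsFiniteMeasure P] {X τ : Ω → ℝ} {r : ℝ}
    (hX : AEMeasurable X P) (hX0 : 0 ≤ᵐ[P] X) (hτ : AEMeasurable τ P)
    (hτlaw : P.map τ = expMeasure r) (hind : IndepFun X τ P) {s : Set (ℝ × ℝ)}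
    (hs : MeasurableSet s)
    (hsec : ∀ x, 0 ≤ x → expMeasure r (Prod.mk x ⁻¹' s) = ENNReal.ofReal (Real.exp (-r * x))) :
    P {ω | (X ω, τ ω) ∈ s} = ∫⁻ ω, ENNReal.ofReal (Real.exp (-r * X ω)) ∂P := by
  rw [measure_mem_eq_lintegral_of_indepFun hX hτ hind hs,
    lintegral_map' (measurable_measure_prodMk_left hs).aemeasurable hX, hτlaw]
  exact lintegral_congr_ae (hX0.mono fun ω hω => hsec _ hω)

lemma integral_mul_exp_mul (ζ x : ℝ) :
    ∫ t in (0 : ℝ)..x, ζ * Real.exp (ζ * t) = Real.exp (ζ * x) - 1 := by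
  rw [intervalIntegral.integral_deriv_eq_sub' (fun t => Real.exp (ζ * t))]
  · simp
  · funext t
    rw [deriv_exp (by fun_prop), deriv_const_mul_field', deriv_id'']
    ring
  · intro t _
    fun_prop
  · fun_prop

lemma integrable_exp_mul_of_measure_lt_le [IsFiniteMeasure P] {X : Ω → ℝ} {ζ a K : ℝ}
    (hX : AEMeasurable X P) (hX0 : 0 ≤ᵐ[P] X) (hζ : 0 ≤ ζ) (hζa : ζ < a)
    (htail : ∀ s, 0 ≤ s → P {ω | s < X ω} ≤ ENNReal.ofReal (K * Real.exp (-a * s))) :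
    Integrable (fun ω => Real.exp (ζ * X ω)) P := by
  have hlayer := lintegral_comp_eq_lintegral_meas_lt_mul P hX0 hX
    (g := fun t => ζ * Real.exp (ζ * t))
    (fun _ _ => (by fun_prop : Continuous _).intervalIntegrable _ _)
    (ae_of_all _ fun t => by positivity)
  simp only [integral_mul_exp_mul] at hlayer
  have hbound : ∫⁻ t in Ioi 0, P {ω | t < X ω} * ENNReal.ofReal (ζ * Real.exp (ζ * t))
      ≤ ∫⁻ t in Ioi 0, ENNReal.ofReal (K * ζ * Real.exp ((ζ - a) * t)) := by
    refine setLIntegral_mono (by fun_prop) fun t ht => ?_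
    calc P {ω | t < X ω} * ENNReal.ofReal (ζ * Real.exp (ζ * t))
        ≤ ENNReal.ofReal (K * Real.exp (-a * t)) * ENNReal.ofReal (ζ * Real.exp (ζ * t)) :=
          mul_le_mul_left (htail t (le_of_lt ht)) _
      _ = ENNReal.ofReal (K * ζ * Real.exp ((ζ - a) * t)) := by
          rw [← ENNReal.ofReal_mul' (by positivity), mul_mul_mul_comm, ← Real.exp_add]
          ring_nf
  have hfin : ∫⁻ t in Ioi 0, ENNReal.ofReal (K * ζ * Real.exp ((ζ - a) * t)) < ∞ :=
    ((integrableOn_exp_mul_Ioi (by linarith) 0).const_mul (K * ζ)).lintegral_lt_top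
  have hint : Integrable (fun ω => Real.exp (ζ * X ω) - 1) P := by
    refine ⟨by fun_prop, (hasFiniteIntegral_iff_ofReal ?_).2 ?_⟩
    · filter_upwards [hX0] with ω hω
      simpa using mul_nonneg hζ hω
    · exact hlayer ▸ hbound.trans_lt hfin
  exact (hint.add (integrable_const 1)).congr (ae_of_all _ fun ω => sub_add_cancel _ _)

end ProbabilityTheory

section LevyExponent

variable {ν : Measure ℝ} {u : ℝ}

lemma one_sub_exp_neg_mul_nonneg (hu : 0 ≤ u) {x : ℝ} (hx : 0 ≤ x) :
    0 ≤ 1 - Real.exp (-u * x) := by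
  rw [sub_nonneg, Real.exp_le_one_iff]
  nlinarith

lemma one_sub_exp_neg_mul_le {x : ℝ} (hx : 0 ≤ x) :
    1 - Real.exp (-u * x) ≤ max 1 u * min 1 x := by
  have h1 : 1 - Real.exp (-u * x) ≤ 1 := by linarith [Real.exp_pos (-u * x)]
  have h2 : 1 - Real.exp (-u * x) ≤ u * x := by linarith [Real.add_one_le_exp (-u * x)]
  rcases le_total x 1 with hx1 | hx1
  · rw [min_eq_right hx1]
    nlinarith [le_max_right 1 u]
  · rw [min_eq_left hx1, mul_one]
    exact h1.trans (le_max_left 1 u)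

lemma integrableOn_one_sub_exp_neg_mul (hν : ∫⁻ x in Ioi 0, ENNReal.ofReal (min 1 x) ∂ν ≠ ∞)
    (hu : 0 ≤ u) : IntegrableOn (fun x => 1 - Real.exp (-u * x)) (Ioi 0) ν := by
  have hmin : IntegrableOn (fun x => min 1 x) (Ioi 0) ν := by
    refine ⟨by fun_prop, (hasFiniteIntegral_iff_ofReal ?_).2 hν.lt_top⟩
    filter_upwards [ae_restrict_mem measurableSet_Ioi] with x hx
    exact le_min zero_le_one (le_of_lt hx)
  refine (hmin.const_mul (max 1 u)).mono' (by fun_prop) ?_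
  filter_upwards [ae_restrict_mem measurableSet_Ioi] with x hx
  rw [Real.norm_of_nonneg (one_sub_exp_neg_mul_nonneg hu (le_of_lt hx))]
  exact one_sub_exp_neg_mul_le (le_of_lt hx)

lemma levyExponent_eq_toReal_lintegral (hu : 0 ≤ u) :
    levyExponent ν u = (∫⁻ x in Ioi 0, ENNReal.ofReal (1 - Real.exp (-u * x)) ∂ν).toReal := by
  refine integral_eq_lintegral_of_nonneg_ae ?_ (by fun_prop)
  filter_upwards [ae_restrict_mem measurableSet_Ioi] with x hx
  exact one_sub_exp_neg_mul_nonneg hu (le_of_lt hx)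

lemma levyExponent_pos (hν : ∫⁻ x in Ioi 0, ENNReal.ofReal (min 1 x) ∂ν ≠ ∞)
    (hν0 : ν (Ioi 0) ≠ 0) (hu : 0 < u) : 0 < levyExponent ν u := by
  rw [levyExponent_eq_toReal_lintegral hu.le]
  refine ENNReal.toReal_pos (pos_iff_ne_zero.1 ?_)
    (integrableOn_one_sub_exp_neg_mul hν hu.le).lintegral_lt_top.ne
  rw [setLIntegral_pos_iff (by fun_prop)]
  have hsupp : Ioi 0 ⊆
      Function.support (fun x => ENNReal.ofReal (1 - Real.exp (-u * x))) ∩ Ioi 0 :=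
    fun x hx => ⟨by simpa using mul_pos hu (mem_Ioi.1 hx), hx⟩
  exact pos_iff_ne_zero.2 fun h0 => hν0 (measure_mono_null hsupp h0)

lemma tendsto_levyExponent_atTop (hν : ∫⁻ x in Ioi 0, ENNReal.ofReal (min 1 x) ∂ν ≠ ∞)
    (hν_top : ν (Ioi 0) = ∞) : Tendsto (fun n : ℕ => levyExponent ν n) atTop atTop := by
  have hlim : Tendsto (fun n : ℕ => ∫⁻ x in Ioi 0, ENNReal.ofReal (1 - Real.exp (-n * x)) ∂ν)
      atTop (𝓝 ∞) := by
    rw [← hν_top, ← setLIntegral_one]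
    refine lintegral_tendsto_of_tendsto_of_monotone (fun n => by fun_prop) ?_ ?_
    · filter_upwards [ae_restrict_mem measurableSet_Ioi] with x hx m n hmn
      refine ENNReal.ofReal_le_ofReal (sub_le_sub_left (Real.exp_le_exp.2 ?_) 1)
      have : (m : ℝ) ≤ n := Nat.cast_le.2 hmn
      nlinarith [mem_Ioi.1 hx]
    · filter_upwards [ae_restrict_mem measurableSet_Ioi] with x hx
      have h := Real.tendsto_exp_neg_atTop_nhds_zero.comp
        (tendsto_natCast_atTop_atTop.atTop_mul_const (mem_Ioi.1 hx))
      simpa [Function.comp_def, neg_mul] using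
        (ENNReal.continuous_ofReal.tendsto _).comp (h.const_sub 1)
  refine tendsto_atTop.2 fun b =>
    (hlim.eventually (lt_mem_nhds (ENNReal.ofReal_lt_top (r := b)))).mono fun n hn => ?_
  rw [levyExponent_eq_toReal_lintegral n.cast_nonneg]
  exact (ENNReal.ofReal_le_iff_le_toReal
    (integrableOn_one_sub_exp_neg_mul hν n.cast_nonneg).lintegral_lt_top.ne).1 hn.le

end LevyExponent

section Pathwise

variable {Ω : Type*} {T : ℝ → Ω → ℝ} {ω : Ω} {s t : ℝ}

lemma invSub_nonneg : 0 ≤ invSub T t ω :=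
  Real.sInf_nonneg fun _ hr => hr.1.le

lemma bddBelow_invSub_set : BddBelow {r : ℝ | 0 < r ∧ t < T r ω} :=
  ⟨0, fun _ hr => hr.1.le⟩

lemma invSub_le {r : ℝ} (hr : 0 < r) (ht : t < T r ω) : invSub T t ω ≤ r :=
  csInf_le bddBelow_invSub_set ⟨hr, ht⟩

lemma le_of_lt_invSub (hmono : MonotoneOn (T · ω) (Ici 0)) (hs : 0 ≤ s)
    (h : s < invSub T t ω) : T s ω ≤ t := by
  by_contra! hts
  refine h.not_ge (le_of_forall_gt_imp_ge_of_dense fun r hr => invSub_le (hs.trans_lt hr) ?_)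
  exact hts.trans_le (hmono hs (hs.trans hr.le) hr.le)

lemma le_invSub (hmono : MonotoneOn (T · ω) (Ici 0)) (hne : ∃ r > 0, t < T r ω)
    (hs : 0 ≤ s) (h : T s ω ≤ t) : s ≤ invSub T t ω := by
  obtain ⟨r, hr, hrt⟩ := hne
  refine le_csInf ⟨r, hr, hrt⟩ fun r' ⟨hr', hr't⟩ => ?_
  by_contra! hlt
  exact (h.trans_lt hr't).not_ge (hmono hr'.le hs hlt.le)

lemma lt_invSub (hmono : MonotoneOn (T · ω) (Ici 0))
    (hrc : ContinuousWithinAt (T · ω) (Ici s) s) (hne : ∃ r > 0, t < T r ω)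
    (hs : 0 ≤ s) (h : T s ω < t) : s < invSub T t ω := by
  have hrc' := hrc.mono_left (nhdsWithin_mono s Ioi_subset_Ici_self)
  obtain ⟨r, hrt, hsr⟩ := ((hrc'.eventually_lt_const h).and self_mem_nhdsWithin).exists
  exact hsr.trans_le (le_invSub hmono hne (hs.trans hsr.le) hrt.le)

lemma invSub_lt_iff (hmono : MonotoneOn (T · ω) (Ici 0)) (a : ℝ) :
    invSub T t ω < a ↔
      (∃ q : ℚ, 0 < (q : ℝ) ∧ (q : ℝ) < a ∧ t < T q ω) ∨
      ((∀ q : ℚ, 0 < (q : ℝ) → T q ω ≤ t) ∧ 0 < a) := by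
  rcases eq_empty_or_nonempty {r : ℝ | 0 < r ∧ t < T r ω} with hA | ⟨b, hb, hbt⟩
  · have hq : ∀ q : ℚ, 0 < (q : ℝ) → T q ω ≤ t := fun q hq =>
      not_lt.1 fun hqt => hA.subset ⟨hq, hqt⟩
    have hA' : ¬ ∃ q : ℚ, 0 < (q : ℝ) ∧ (q : ℝ) < a ∧ t < T q ω := fun ⟨q, hq, _, hqt⟩ =>
      hA.subset ⟨hq, hqt⟩
    simp only [invSub, hA, Real.sInf_empty, hA', false_or, and_iff_right hq]
  · have hq : ¬ ∀ q : ℚ, 0 < (q : ℝ) → T q ω ≤ t := fun hq => by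
      obtain ⟨q, hq'⟩ := exists_rat_gt b
      exact (hbt.trans_le (hmono hb.le (hb.trans hq').le hq'.le)).not_ge (hq q (hb.trans hq'))
    simp only [invSub, csInf_lt_iff bddBelow_invSub_set ⟨b, hb, hbt⟩, hq, false_and, or_false]
    constructor
    · rintro ⟨r, ⟨hr, hrt⟩, hra⟩
      obtain ⟨q, hrq, hqa⟩ := exists_rat_btwn hra
      exact ⟨q, hr.trans hrq, hqa, hrt.trans_le (hmono hr.le (hr.trans hrq).le hrq.le)⟩
    · rintro ⟨q, hq, hqa, hqt⟩
      exact ⟨q, ⟨hq, hqt⟩, hqa⟩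

end Pathwise

section Measurability

variable {Ω : Type*} [MeasurableSpace Ω] {T : ℝ → Ω → ℝ} {h : Ω → ℝ}

lemma measurable_invSub (hT : ∀ r, Measurable (T r))
    (hmono : ∀ ω, MonotoneOn (T · ω) (Ici 0)) (hh : Measurable h) :
    Measurable fun ω => invSub T (h ω) ω := by
  refine measurable_of_Iio fun a => ?_
  have hpre : (fun ω => invSub T (h ω) ω) ⁻¹' Iio a = {ω |
      (∃ q : ℚ, 0 < (q : ℝ) ∧ (q : ℝ) < a ∧ h ω < T q ω) ∨
      ((∀ q : ℚ, 0 < (q : ℝ) → T q ω ≤ h ω) ∧ 0 < a)} :=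
    ext fun ω => invSub_lt_iff (hmono ω) a
  rw [hpre]
  measurability

lemma aemeasurable_invSub {P : Measure Ω} (hT : ∀ r, Measurable (T r))
    (hmono : ∀ᵐ ω ∂P, MonotoneOn (T · ω) (Ici 0)) (hh : Measurable h) :
    AEMeasurable (fun ω => invSub T (h ω) ω) P := by
  obtain ⟨G, hG, hGm, hGmono⟩ := hmono.exists_measurable_mem
  have hmono' : ∀ ω, MonotoneOn (fun r => G.indicator (T r) ω) (Ici 0) := fun ω => by
    by_cases hω : ω ∈ G
    · simpa only [indicator_of_mem hω] using hGmono ω hω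
    · simpa only [indicator_of_notMem hω] using monotoneOn_const
  refine ⟨_, measurable_invSub (fun r => (hT r).indicator hGm) hmono' hh, ?_⟩
  filter_upwards [hG] with ω hω
  simp only [invSub, indicator_of_mem hω]

end Measurability

section Subordinator

variable {Ω : Type*} [MeasurableSpace Ω] {P : Measure Ω} {T : ℝ → Ω → ℝ} {f : ℝ → ℝ}
  {τ : Ω → ℝ} {s u : ℝ}

lemma IsSubordinatorProc.nonneg (hT : IsSubordinatorProc P T) (hs : 0 ≤ s) : 0 ≤ᵐ[P] T s := by
  filter_upwards [hT.start, hT.mono] with ω h0 hmono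
  simpa [h0] using hmono (mem_Ici.2 le_rfl) hs hs

lemma HasLaplaceExponent.integrable_exp (hLap : HasLaplaceExponent P T f) (hs : 0 ≤ s)
    (hu : 0 < u) : Integrable (fun ω => Real.exp (-u * T s ω)) P :=
  Integrable.of_integral_ne_zero (by rw [hLap s hs u hu]; positivity)

lemma HasLaplaceExponent.lintegral_exp (hLap : HasLaplaceExponent P T f) (hs : 0 ≤ s)
    (hu : 0 < u) :
    ∫⁻ ω, ENNReal.ofReal (Real.exp (-u * T s ω)) ∂P = ENNReal.ofReal (Real.exp (-s * f u)) := by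
  rw [← hLap s hs u hu, ofReal_integral_eq_lintegral_ofReal (hLap.integrable_exp hs hu)
    (ae_of_all _ fun ω => (Real.exp_pos _).le)]

lemma ae_exists_lt_of_measure_le_eq {c : ℝ} (hc : 0 < c)
    (h : ∀ s, 0 ≤ s → P {ω | T s ω ≤ τ ω} = ENNReal.ofReal (Real.exp (-s * c))) :
    ∀ᵐ ω ∂P, ∃ r > 0, τ ω < T r ω := by
  have hlim : Tendsto (fun n : ℕ => ENNReal.ofReal (Real.exp (-(n + 1 : ℝ) * c))) atTop
      (𝓝 0) := by
    have h := (tendsto_atTop_add_const_right _ 1 tendsto_natCast_atTop_atTop).atTop_mul_const hc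
    simpa only [Function.comp_def, neg_mul, Real.exp_zero, ENNReal.ofReal_zero] using
      (ENNReal.continuous_ofReal.tendsto 0).comp
      (Real.tendsto_exp_atBot.comp (tendsto_neg_atTop_atBot.comp h))
  have hle : ∀ n : ℕ, P {ω | ∀ m : ℕ, T (m + 1) ω ≤ τ ω}
      ≤ ENNReal.ofReal (Real.exp (-(n + 1 : ℝ) * c)) := fun n =>
    (measure_mono fun ω (hω : ∀ m : ℕ, T (m + 1) ω ≤ τ ω) => hω n).trans_eq (h _ (by positivity))
  have hnull : P {ω | ∀ m : ℕ, T (m + 1) ω ≤ τ ω} = 0 :=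
    le_antisymm (ge_of_tendsto' hlim hle) bot_le
  filter_upwards [measure_eq_zero_iff_ae_notMem.1 hnull] with ω hω
  obtain ⟨n, hn⟩ := not_forall.1 hω
  exact ⟨n + 1, by positivity, not_le.1 hn⟩

variable [IsProbabilityMeasure P]

lemma HasLaplaceExponent.measure_lt_of_indepFun (hT : IsSubordinatorProc P T)
    (hLap : HasLaplaceExponent P T f) (hu : 0 < u) (hτ : Measurable τ)
    (hτlaw : P.map τ = expMeasure u) (hind : IndepFun (T s) τ P) (hs : 0 ≤ s) :
    P {ω | T s ω < τ ω} = ENNReal.ofReal (Real.exp (-s * f u)) := by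
  rw [← hLap.lintegral_exp hs hu]
  exact measure_mem_eq_lintegral_exp_of_indepFun (hT.meas s).aemeasurable (hT.nonneg hs)
    hτ.aemeasurable hτlaw hind (measurableSet_lt measurable_fst measurable_snd)
    fun x hx => expMeasure_Ioi hu hx

lemma HasLaplaceExponent.measure_le_of_indepFun (hT : IsSubordinatorProc P T)
    (hLap : HasLaplaceExponent P T f) (hu : 0 < u) (hτ : Measurable τ)
    (hτlaw : P.map τ = expMeasure u) (hind : IndepFun (T s) τ P) (hs : 0 ≤ s) :
    P {ω | T s ω ≤ τ ω} = ENNReal.ofReal (Real.exp (-s * f u)) := by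
  rw [← hLap.lintegral_exp hs hu]
  exact measure_mem_eq_lintegral_exp_of_indepFun (hT.meas s).aemeasurable (hT.nonneg hs)
    hτ.aemeasurable hτlaw hind (measurableSet_le measurable_fst measurable_snd)
    fun x hx => expMeasure_Ici hu hx

lemma measure_lt_invSub_comp (hT : IsSubordinatorProc P T) (hLap : HasLaplaceExponent P T f)
    (hf : 0 < f u) (hu : 0 < u) (hτ : Measurable τ) (hτlaw : P.map τ = expMeasure u)
    (hind : IndepFun τ (fun ω t => T t ω) P) (hs : 0 ≤ s) :
    P {ω | s < invSub T (τ ω) ω} = ENNReal.ofReal (Real.exp (-f u * s)) := by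
  have hindT : ∀ r, IndepFun (T r) τ P := fun r =>
    hind.symm.comp (measurable_pi_apply r) measurable_id
  have hne := ae_exists_lt_of_measure_le_eq hf fun r hr =>
    hLap.measure_le_of_indepFun hT hu hτ hτlaw (hindT r) hr
  rw [show -f u * s = -s * f u by ring]
  refine le_antisymm ?_ ?_
  · rw [← hLap.measure_le_of_indepFun hT hu hτ hτlaw (hindT s) hs]
    refine measure_mono_ae ?_
    filter_upwards [hT.mono] with ω hmono
    exact le_of_lt_invSub hmono hs
  · rw [← hLap.measure_lt_of_indepFun hT hu hτ hτlaw (hindT s) hs]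
    refine measure_mono_ae ?_
    filter_upwards [hT.mono, hT.rightCont, hne] with ω hmono hrc hne
    exact lt_invSub hmono (hrc s hs) hne hs

lemma map_invSub_comp_eq_expMeasure (hT : IsSubordinatorProc P T)
    (hLap : HasLaplaceExponent P T f)
    (hf : 0 < f u) (hu : 0 < u) (hτ : Measurable τ) (hτlaw : P.map τ = expMeasure u)
    (hind : IndepFun τ (fun ω t => T t ω) P) :
    P.map (fun ω => invSub T (τ ω) ω) = expMeasure (f u) :=
  map_eq_expMeasure (aemeasurable_invSub hT.meas hT.mono hτ) hf
    fun _ hs => measure_lt_invSub_comp hT hLap hf hu hτ hτlaw hind hs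

lemma measure_lt_invSub_le (hT : IsSubordinatorProc P T) (hLap : HasLaplaceExponent P T f)
    {v : ℝ} (hv : 0 < v) (t : ℝ) (hs : 0 ≤ s) :
    P {ω | s < invSub T t ω} ≤ ENNReal.ofReal (Real.exp (v * t) * Real.exp (-f v * s)) := by
  have hmgf : mgf (T s) P (-v) = Real.exp (-s * f v) := hLap s hs v hv
  calc P {ω | s < invSub T t ω} ≤ P {ω | T s ω ≤ t} := by
        refine measure_mono_ae ?_
        filter_upwards [hT.mono] with ω hmono
        exact le_of_lt_invSub hmono hs
    _ = ENNReal.ofReal (P.real {ω | T s ω ≤ t}) := (ofReal_measureReal (measure_ne_top _ _)).symm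
    _ ≤ ENNReal.ofReal (Real.exp (v * t) * Real.exp (-f v * s)) := by
        refine ENNReal.ofReal_le_ofReal ?_
        have h := measure_le_le_exp_mul_mgf t (neg_nonpos.2 hv.le) (hLap.integrable_exp hs hv)
        rwa [hmgf, neg_neg, show -s * f v = -f v * s by ring] at h

lemma integrable_exp_mul_invSub (hT : IsSubordinatorProc P T) (hLap : HasLaplaceExponent P T f)
    (hf : Tendsto (fun n : ℕ => f n) atTop atTop) (t : ℝ) {ζ : ℝ} (hζ : 0 ≤ ζ) :
    Integrable (fun ω => Real.exp (ζ * invSub T t ω)) P := by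
  obtain ⟨n, hn, hζn⟩ := ((eventually_gt_atTop 0).and (hf.eventually_gt_atTop ζ)).exists
  have hn' : (0 : ℝ) < n := Nat.cast_pos.2 hn
  exact integrable_exp_mul_of_measure_lt_le (aemeasurable_invSub hT.meas hT.mono measurable_const)
    (ae_of_all _ fun _ => invSub_nonneg) hζ hζn fun s hs => measure_lt_invSub_le hT hLap hn' t hs

end Subordinator

/-- Let `τ` be exponentially distributed with rate `u > 0`, independent of
the subordinator `T`, and let `ξ < f(u)`.  Then `E[exp(ξ S(τ))] = f(u)/(f(u) - ξ)`.
In particular, `S(t)` has finite exponential moments of all orders: for every `t > 0` and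
`ξ > 0`, `E[exp(ξ S(t))] < ∞`. -/
theorem invSub_exponential_moments
    {Ω : Type*} [mΩ : MeasurableSpace Ω] (P : Measure Ω) [IsProbabilityMeasure P]
    (T : ℝ → Ω → ℝ) (ν : Measure ℝ)
    (hT : IsSubordinatorProc P T) (hν : IsLevyMeasure ν)
    (hLap : HasLaplaceExponent P T (levyExponent ν))
    (u : ℝ) (hu : 0 < u) (τ : Ω → ℝ) (hτm : Measurable τ)
    (hτdist : ∀ x : ℝ, 0 ≤ x → P {ω | x < τ ω} = ENNReal.ofReal (Real.exp (-u * x)))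
    (hτind : IndepFun τ (fun ω (t : ℝ) => T t ω) P)
    (ξ : ℝ) (hξ : ξ < levyExponent ν u) :
    (∫ ω, Real.exp (ξ * invSub T (τ ω) ω) ∂P =
      levyExponent ν u / (levyExponent ν u - ξ)) ∧
    (∀ t : ℝ, 0 < t → ∀ ζ : ℝ, 0 < ζ →
      Integrable (fun ω => Real.exp (ζ * invSub T t ω)) P) := by
  have hfu : 0 < levyExponent ν u := levyExponent_pos hν.2.2 (by simp [hν.2.1]) hu
  have hτlaw : P.map τ = expMeasure u := map_eq_expMeasure hτm.aemeasurable hu hτdist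
  refine ⟨?_, fun t _ ζ hζ => integrable_exp_mul_invSub hT hLap
    (tendsto_levyExponent_atTop hν.2.2 hν.2.1) t hζ.le⟩
  have hS := aemeasurable_invSub hT.meas hT.mono hτm
  rw [← integral_map (f := fun y => Real.exp (ξ * y)) hS (by fun_prop),
    map_invSub_comp_eq_expMeasure hT hLap hfu hu hτm hτlaw hτind,
    integral_exp_mul_expMeasure hfu hξ]
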